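/- The improper integral (4/π) ∫₀^∞ q^{-3} [π/(1 + e^{4q/π}) − π/2 + q] dq converges and equals 56 ζ(3)/π⁴, where ζ is the Riemann zeta function. -/

import Mathlib

/-!
Subtracting the partial fraction expansion `tanh x = ∑ₖ 8x / ((2k+1)²π² + 4x²)`, obtained from the
cotangent series through `tanh t = 2 coth 2t - coth t`, from `x = ∑ₖ 8x / ((2k+1)²π²)` gives
`(x - tanh x) / x³ = ∑ₖ 8 / ((2k+1)π)² · (((2k+1)π/2)² + x²)⁻¹`. The terms are nonnegative, so the
series may be integrated termwise over `(0, ∞)`, which gives `∑ₖ 8 / (π² (2k+1)³) = 7 ζ(3) / π²`.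
Since `1 / (1 + e^{2x}) = (1 - tanh x) / 2`, the substitution `q = πx/2` turns the bracket into
`(π/2)(x - tanh x)`.
-/

open MeasureTheory Real

/-- `ζ(3) = Σ_{n≥1} 1/n³`. -/
noncomputable def zeta3 : ℝ := ∑' n : ℕ, 1 / ((n : ℝ) + 1) ^ 3

open Filter Set Topology

lemma hasSum_one_div_odd_pow {p : ℕ} (hp : 1 < p) :
    HasSum (fun k : ℕ => 1 / (2 * (k : ℝ) + 1) ^ p)
      ((1 - 1 / 2 ^ p) * ∑' n : ℕ, 1 / (n : ℝ) ^ p) := by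
  have hf := Real.summable_one_div_nat_pow.mpr hp
  have heven : HasSum (fun k : ℕ => 1 / ((2 * k : ℕ) : ℝ) ^ p)
      (1 / 2 ^ p * ∑' n : ℕ, 1 / (n : ℝ) ^ p) := by
    refine (hf.hasSum.mul_left _).congr_fun fun k => ?_
    rcases eq_or_ne k 0 with rfl | hk
    · simp [zero_pow (by omega : p ≠ 0)]
    · push_cast; field_simp; ring
  have hodd : Summable (fun k : ℕ => 1 / ((2 * k + 1 : ℕ) : ℝ) ^ p) :=
    hf.comp_injective fun a b h => by simpa using h
  have hsplit := hf.hasSum.unique (heven.even_add_odd hodd.hasSum)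
  convert hodd.hasSum using 1
  · push_cast; rfl
  · linear_combination hsplit

lemma hasSum_one_div_odd_sq : HasSum (fun k : ℕ => 1 / (2 * (k : ℝ) + 1) ^ 2) (π ^ 2 / 8) := by
  convert hasSum_one_div_odd_pow one_lt_two using 1
  rw [hasSum_zeta_two.tsum_eq]
  ring

lemma hasSum_one_div_odd_cube :
    HasSum (fun k : ℕ => 1 / (2 * (k : ℝ) + 1) ^ 3) (7 / 8 * zeta3) := by
  convert hasSum_one_div_odd_pow (by norm_num : 1 < 3) using 1
  rw [(Real.summable_one_div_nat_pow.mpr (by norm_num : 1 < 3)).tsum_eq_zero_add, zeta3]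
  push_cast
  ring

/-- The cotangent series at `x = it/π`, where `π cot (πx) = -iπ coth t`. -/
lemma hasSum_coth_sub_inv {t : ℝ} (ht : t ≠ 0) :
    HasSum (fun n : ℕ => 2 * t / (t ^ 2 + π ^ 2 * (n + 1) ^ 2)) (cosh t / sinh t - 1 / t) := by
  set x : ℂ := t * Complex.I / π with hx_def
  have ht' : (t : ℂ) ≠ 0 := Complex.ofReal_ne_zero.mpr ht
  have hx : x ∈ Complex.integerComplement := by
    rintro ⟨n, hn⟩
    have : x.im ≠ 0 := by simp [hx_def, ht, pi_ne_zero]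
    simp [← hn] at this
  have hcot := ((summable_cotTerm hx).hasSum_iff.mpr (cot_series_rep' hx).symm).mul_left
    (Complex.I / π)
  have hterm (n : ℕ) : ((2 * t / (t ^ 2 + π ^ 2 * (n + 1) ^ 2) : ℝ) : ℂ)
      = Complex.I / π * cotTerm x n := by
    have hD : (t : ℂ) ^ 2 + π ^ 2 * (n + 1) ^ 2 ≠ 0 := by
      exact_mod_cast (by positivity : t ^ 2 + π ^ 2 * (n + 1) ^ 2 ≠ 0)
    have hprod : (x + (n + 1)) * (x - (n + 1)) = -((t : ℂ) ^ 2 + π ^ 2 * (n + 1) ^ 2) / π ^ 2 := by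
      rw [hx_def]
      field_simp
      linear_combination t ^ 2 * Complex.I_sq
    rw [cotTerm_identity hx, hprod, hx_def]
    push_cast
    field_simp
    linear_combination Complex.I_sq
  have hsum : ((cosh t / sinh t - 1 / t : ℝ) : ℂ)
      = Complex.I / π * (π * Complex.cot (π * x) - 1 / x) := by
    have hsinh : (sinh t : ℂ) ≠ 0 := Complex.ofReal_ne_zero.mpr (sinh_ne_zero.mpr ht)
    have hπx : (π : ℂ) * x = t * Complex.I := by rw [hx_def]; field_simp
    rw [hπx, Complex.cot_eq_cos_div_sin, Complex.cos_mul_I, Complex.sin_mul_I, hx_def]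
    push_cast
    field_simp
  refine Complex.hasSum_ofReal.mp ?_
  rw [hsum]
  exact hcot.congr_fun hterm

/-- The coth series at `t` is the odd-indexed half of twice the one at `2t`, and the even-indexed
half is `2 coth 2t - coth t = tanh t`. -/
lemma hasSum_tanh (t : ℝ) :
    HasSum (fun k : ℕ => 8 * t / (π ^ 2 * (2 * k + 1) ^ 2 + 4 * t ^ 2)) (tanh t) := by
  rcases eq_or_ne t 0 with rfl | ht
  · simp [hasSum_zero]
  have hall : HasSum (fun n : ℕ => 8 * t / (π ^ 2 * ((n : ℝ) + 1) ^ 2 + 4 * t ^ 2))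
      (2 * (cosh (2 * t) / sinh (2 * t) - 1 / (2 * t))) := by
    refine ((hasSum_coth_sub_inv (mul_ne_zero two_ne_zero ht)).mul_left 2).congr_fun fun n => ?_
    have : 0 < π ^ 2 * (n + 1) ^ 2 + 4 * t ^ 2 := by positivity
    field_simp
    ring
  have hodd : HasSum (fun k : ℕ => 8 * t / (π ^ 2 * (((2 * k + 1 : ℕ) : ℝ) + 1) ^ 2 + 4 * t ^ 2))
      (cosh t / sinh t - 1 / t) := by
    refine (hasSum_coth_sub_inv ht).congr_fun fun k => ?_
    have : 0 < π ^ 2 * (k + 1) ^ 2 + t ^ 2 := by positivity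
    push_cast
    field_simp
    ring
  have heven : HasSum (fun k : ℕ => 8 * t / (π ^ 2 * (((2 * k : ℕ) : ℝ) + 1) ^ 2 + 4 * t ^ 2))
      (2 * (cosh (2 * t) / sinh (2 * t) - 1 / (2 * t)) - (cosh t / sinh t - 1 / t)) := by
    have hs := hall.summable.comp_injective (mul_right_injective₀ (two_ne_zero' ℕ))
    rw [hall.unique (hs.hasSum.even_add_odd hodd), add_sub_cancel_right]
    exact hs.hasSum
  convert heven using 1
  · push_cast; rfl
  · have hc := (cosh_pos t).ne'
    have hs := sinh_ne_zero.mpr ht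
    rw [tanh_eq_sinh_div_cosh, cosh_two_mul, sinh_two_mul]
    field_simp
    ring

lemma hasDerivAt_arctan_div_div {a : ℝ} (ha : a ≠ 0) (x : ℝ) :
    HasDerivAt (fun x => arctan (x / a) / a) (a ^ 2 + x ^ 2)⁻¹ x := by
  refine (((hasDerivAt_id x).div_const a).arctan.div_const a).congr_deriv ?_
  simp only [id]
  field_simp

lemma tendsto_arctan_div_div {a : ℝ} (ha : 0 < a) :
    Tendsto (fun x => arctan (x / a) / a) atTop (𝓝 (π / (2 * a))) := by
  have := ((tendsto_nhds_of_tendsto_nhdsWithin tendsto_arctan_atTop).comp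
    (tendsto_id.atTop_div_const ha)).div_const a
  rwa [div_div] at this

lemma integrableOn_Ioi_inv_sq_add_sq {a : ℝ} (ha : 0 < a) :
    IntegrableOn (fun x => (a ^ 2 + x ^ 2)⁻¹) (Ioi 0) :=
  integrableOn_Ioi_deriv_of_nonneg
    (hasDerivAt_arctan_div_div ha.ne' 0).continuousAt.continuousWithinAt
    (fun x _ => hasDerivAt_arctan_div_div ha.ne' x) (fun x _ => by positivity)
    (tendsto_arctan_div_div ha)

lemma integral_Ioi_inv_sq_add_sq {a : ℝ} (ha : 0 < a) :
    ∫ x in Ioi 0, (a ^ 2 + x ^ 2)⁻¹ = π / (2 * a) := by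
  rw [integral_Ioi_of_hasDerivAt_of_nonneg
    (hasDerivAt_arctan_div_div ha.ne' 0).continuousAt.continuousWithinAt
    (fun x _ => hasDerivAt_arctan_div_div ha.ne' x) (fun x _ => by positivity)
    (tendsto_arctan_div_div ha)]
  simp

lemma hasFiniteIntegral_tsum_of_summable_integral_norm {ι α E : Type*} [Countable ι]
    [MeasurableSpace α] {μ : Measure α} [NormedAddCommGroup E] {F : ι → α → E}
    (hF_int : ∀ i, Integrable (F i) μ) (hF_sum : Summable fun i => ∫ a, ‖F i a‖ ∂μ) :
    HasFiniteIntegral (fun a => ∑' i, F i a) μ :=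
  calc ∫⁻ a, ‖∑' i, F i a‖ₑ ∂μ
      ≤ ∫⁻ a, ∑' i, ‖F i a‖ₑ ∂μ := lintegral_mono fun _ => enorm_tsum_le_tsum_enorm
    _ = ∑' i, ∫⁻ a, ‖F i a‖ₑ ∂μ :=
      lintegral_tsum fun i => (hF_int i).aestronglyMeasurable.enorm
    _ = ∑' i, ENNReal.ofReal (∫ a, ‖F i a‖ ∂μ) := by
      simp_rw [ofReal_integral_norm_eq_lintegral_enorm (hF_int _)]
    _ = ENNReal.ofReal (∑' i, ∫ a, ‖F i a‖ ∂μ) :=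
      (ENNReal.ofReal_tsum_of_nonneg (fun _ => integral_nonneg fun _ => norm_nonneg _) hF_sum).symm
    _ < ⊤ := ENNReal.ofReal_lt_top

noncomputable def tanhDefectTerm (k : ℕ) (x : ℝ) : ℝ :=
  8 / (π * (2 * k + 1)) ^ 2 * ((π * (2 * k + 1) / 2) ^ 2 + x ^ 2)⁻¹

lemma tanhDefectTerm_nonneg (k : ℕ) (x : ℝ) : 0 ≤ tanhDefectTerm k x := by
  unfold tanhDefectTerm
  positivity

lemma hasSum_tanhDefectTerm {x : ℝ} (hx : x ≠ 0) :
    HasSum (fun k => tanhDefectTerm k x) ((x - tanh x) / x ^ 3) := by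
  have hid : HasSum (fun k : ℕ => 8 * x / π ^ 2 * (1 / (2 * (k : ℝ) + 1) ^ 2)) x := by
    have h := hasSum_one_div_odd_sq.mul_left (8 * x / π ^ 2)
    rwa [show 8 * x / π ^ 2 * (π ^ 2 / 8) = x by field_simp] at h
  refine ((hid.sub (hasSum_tanh x)).div_const (x ^ 3)).congr_fun fun k => ?_
  have : 0 < π ^ 2 * (2 * k + 1) ^ 2 + 4 * x ^ 2 := by positivity
  unfold tanhDefectTerm
  field_simp
  ring

lemma integrableOn_tanhDefectTerm (k : ℕ) : IntegrableOn (tanhDefectTerm k) (Ioi 0) :=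
  (integrableOn_Ioi_inv_sq_add_sq (by positivity)).const_mul _

lemma hasSum_integral_tanhDefectTerm :
    HasSum (fun k => ∫ x in Ioi 0, tanhDefectTerm k x) (7 * zeta3 / π ^ 2) := by
  have hint (k : ℕ) :
      ∫ x in Ioi 0, tanhDefectTerm k x = 8 / π ^ 2 * (1 / (2 * (k : ℝ) + 1) ^ 3) := by
    unfold tanhDefectTerm
    rw [integral_const_mul, integral_Ioi_inv_sq_add_sq (by positivity)]
    field_simp
  simp_rw [hint]
  have h := hasSum_one_div_odd_cube.mul_left (8 / π ^ 2)
  rwa [show 8 / π ^ 2 * (7 / 8 * zeta3) = 7 * zeta3 / π ^ 2 by ring] at h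

lemma summable_integral_norm_tanhDefectTerm :
    Summable fun k => ∫ x in Ioi 0, ‖tanhDefectTerm k x‖ := by
  simp_rw [Real.norm_of_nonneg (tanhDefectTerm_nonneg _ _)]
  exact hasSum_integral_tanhDefectTerm.summable

lemma tsum_tanhDefectTerm_ae_eq :
    (fun x => ∑' k, tanhDefectTerm k x) =ᵐ[volume.restrict (Ioi 0)]
      fun x => (x - tanh x) / x ^ 3 :=
  (ae_restrict_mem measurableSet_Ioi).mono fun _ hx =>
    (hasSum_tanhDefectTerm (ne_of_gt hx)).tsum_eq

lemma measurable_tanh : Measurable tanh := by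
  rw [funext tanh_eq_sinh_div_cosh]
  fun_prop

theorem integrableOn_sub_tanh_div_cube :
    IntegrableOn (fun x => (x - tanh x) / x ^ 3) (Ioi 0) :=
  ⟨((measurable_id.sub measurable_tanh).div (measurable_id.pow_const 3)).aestronglyMeasurable,
    (hasFiniteIntegral_tsum_of_summable_integral_norm integrableOn_tanhDefectTerm
      summable_integral_norm_tanhDefectTerm).congr tsum_tanhDefectTerm_ae_eq⟩

theorem integral_sub_tanh_div_cube :
    ∫ x in Ioi 0, (x - tanh x) / x ^ 3 = 7 * zeta3 / π ^ 2 := by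
  rw [← integral_congr_ae tsum_tanhDefectTerm_ae_eq, ← integral_tsum_of_summable_integral_norm
    integrableOn_tanhDefectTerm summable_integral_norm_tanhDefectTerm]
  exact hasSum_integral_tanhDefectTerm.tsum_eq

lemma inv_one_add_exp_two_mul (y : ℝ) : (1 + exp (2 * y))⁻¹ = (1 - tanh y) / 2 := by
  have he := exp_pos y
  rw [tanh_eq_sinh_div_cosh, sinh_eq, cosh_eq, exp_neg, two_mul, exp_add]
  field_simp
  ring

lemma zpow_neg_three_mul_eq_sub_tanh_div_cube (q : ℝ) :
    q ^ (-3 : ℤ) * (π / (1 + exp (4 * q / π)) - π / 2 + q)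
      = 4 / π ^ 2 * ((2 / π * q - tanh (2 / π * q)) / (2 / π * q) ^ 3) := by
  rcases eq_or_ne q 0 with rfl | hq
  · simp
  rw [show 4 * q / π = 2 * (2 / π * q) by ring, div_eq_mul_inv π, inv_one_add_exp_two_mul]
  field_simp
  ring

theorem integral_v0_plus :
    IntegrableOn
      (fun q : ℝ => q ^ (-3 : ℤ) *
        (Real.pi / (1 + Real.exp (4 * q / Real.pi)) - Real.pi / 2 + q)) (Set.Ioi 0) ∧
    (4 / Real.pi) * ∫ q in Set.Ioi (0 : ℝ),
        q ^ (-3 : ℤ) * (Real.pi / (1 + Real.exp (4 * q / Real.pi)) - Real.pi / 2 + q)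
      = 56 * zeta3 / Real.pi ^ 4 := by
  have hπ := pi_ne_zero
  have hc : 0 < 2 / π := by positivity
  simp_rw [zpow_neg_three_mul_eq_sub_tanh_div_cube]
  constructor
  · refine ((integrableOn_Ioi_comp_mul_left_iff (fun x => (x - tanh x) / x ^ 3) 0 hc).mpr
      ?_).const_mul _
    simpa using integrableOn_sub_tanh_div_cube
  · rw [integral_const_mul, integral_comp_mul_left_Ioi (fun x => (x - tanh x) / x ^ 3) 0 hc,
      mul_zero, integral_sub_tanh_div_cube, smul_eq_mul]
    field_simp
    ring
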